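/- arXiv:2206.04552 — 3 statements merged into one kernel-verified Lean document; each statement's English description precedes it below -/
import Mathlib

section
/- Stein–Tikhomirov form of the spectral representation for a Gaussian target (Remark 4): suppose U ≡ 0 (so the target is N_C and Γf(x) = C Df(x) − x f(x), and the Stein kernel simplifies to h_v(x,x') = ∑_{i≥1} λ_i² D₂D₁k(x,x')[e_i,e_i] − ⟨D₁k(x,x'), C x'⟩ − ⟨D₂k(x,x'), C x⟩ + k(x,x')⟨x, x'⟩), and assume ∫ ‖s‖² dμ(s) < ∞ and ∫ ‖x‖² dQ(x) < ∞. Then ∫_X ∫_X h_v(x,x') dQ(x) dQ(x') = ∫_X ‖ Cs · Q̂(s) + DQ̂(s) ‖²_{X_ℂ} dμ(s), where Q̂(s) = ∫ e^{i⟨s,x⟩} dQ(x) and DQ̂(s) = i ∫ x e^{i⟨s,x⟩} dQ(x) ∈ X_ℂ (Bochner integral). -/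
/-!
For a Gaussian target the Stein operator sends the Fourier feature `x ↦ e^{i⟪s,x⟫}` to `i ξ_s`,
where `ξ_s(x) = e^{i⟪s,x⟫} (C s + i x) ∈ X_ℂ`. Since `k(x,x') = ∫ cos⟪x - x', s⟫ dμ(s)`, the
derivatives of `k` can be taken under the integral (the second moment of `μ` dominates them), and
Parseval in the eigenbasis turns `∑ λᵢ² ⟪s,eᵢ⟫²` into `‖C s‖²`; together this gives
`h_v(x,x') = ∫ Re ⟨ξ_s(x), ξ_s(x')⟩_{X_ℂ} dμ(s)`. As `‖ξ_s(x)‖² = ‖C s‖² + ‖x‖²`, the second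
moments of `Q` and `μ` justify Fubini, and `∫∫ ⟨ξ_s(x), ξ_s(x')⟩ dQ dQ = ‖∫ ξ_s dQ‖²` with
`∫ ξ_s dQ = C s Q̂(s) + DQ̂(s)`.
-/

open MeasureTheory Filter
open scoped RealInnerProductSpace

/-- The vectorised Stein kernel for a centred Gaussian target (potential `U ≡ 0`):
`h_v(x,x') = ∑ᵢ λᵢ² D₂D₁k(x,x')[eᵢ,eᵢ] - ⟪D₁k(x,x'), Cx'⟫ - ⟪D₂k(x,x'), Cx⟫
  + k(x,x')⟪x, x'⟫`. -/
noncomputable def steinKernelHvGauss {X : Type*} [NormedAddCommGroup X]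
    [InnerProductSpace ℝ X] (k : X → X → ℝ) (C : X →L[ℝ] X) (e : ℕ → X) (l : ℕ → ℝ)
    (x x' : X) : ℝ :=
  (∑' i, l i ^ 2 *
      fderiv ℝ (fun y1 => fderiv ℝ (fun x1 => k x1 y1) x (e i)) x' (e i))
  - fderiv ℝ (fun x1 => k x1 x') x (C x')
  - fderiv ℝ (fun y1 => k x y1) x' (C x)
  + k x x' * ⟪x, x'⟫

theorem Summable.sq {ι : Type*} {l : ι → ℝ} (hl : Summable l) : Summable fun i => l i ^ 2 := by
  refine .of_norm_bounded_eventually hl.abs ?_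
  filter_upwards [hl.tendsto_cofinite_zero.eventually (Metric.closedBall_mem_nhds 0 one_pos)]
    with i hi
  rw [dist_zero_right, Real.norm_eq_abs] at hi
  rw [norm_pow, Real.norm_eq_abs, pow_two]
  exact mul_le_of_le_one_left (abs_nonneg _) hi

theorem integral_integral_integral_swap {α β γ E : Type*} [MeasurableSpace α] [MeasurableSpace β]
    [MeasurableSpace γ] [NormedAddCommGroup E] [NormedSpace ℝ E] {ν₁ : Measure α}
    {ν₂ : Measure β} {ν₃ : Measure γ} [SFinite ν₁] [SFinite ν₂] [SFinite ν₃]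
    {f : α → β → γ → E}
    (hf : Integrable (fun p : (α × β) × γ => f p.1.1 p.1.2 p.2) ((ν₁.prod ν₂).prod ν₃)) :
    ∫ a, ∫ b, ∫ c, f a b c ∂ν₃ ∂ν₂ ∂ν₁ = ∫ c, ∫ a, ∫ b, f a b c ∂ν₂ ∂ν₁ ∂ν₃ := by
  calc ∫ a, ∫ b, ∫ c, f a b c ∂ν₃ ∂ν₂ ∂ν₁
      = ∫ q, ∫ c, f q.1 q.2 c ∂ν₃ ∂(ν₁.prod ν₂) := (integral_prod _ hf.integral_prod_left).symm
    _ = ∫ c, ∫ q, f q.1 q.2 c ∂(ν₁.prod ν₂) ∂ν₃ := integral_integral_swap hf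
    _ = ∫ c, ∫ a, ∫ b, f a b c ∂ν₂ ∂ν₁ ∂ν₃ :=
      integral_congr_ae (hf.prod_left_ae.mono fun _ hc => integral_prod _ hc)

theorem ContinuousLinearMap.integrable_norm_sq_comp {α E F : Type*} [MeasurableSpace α]
    {μ : Measure α} [NormedAddCommGroup E] [NormedSpace ℝ E] [NormedAddCommGroup F]
    [NormedSpace ℝ F] (L : E →L[ℝ] F) {f : α → E} (hf : MemLp f 2 μ) :
    Integrable (fun a => ‖L (f a)‖ ^ 2) μ :=
  (memLp_two_iff_integrable_sq_norm (L.comp_memLp' hf).1).1 (L.comp_memLp' hf)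

section InnerProductSpace

variable {E : Type*} [NormedAddCommGroup E] [InnerProductSpace ℝ E]

theorem abs_inner_add_inner_le (a b a' b' : E) :
    |⟪a, a'⟫ + ⟪b, b'⟫| ≤ (‖a‖ ^ 2 + ‖b‖ ^ 2) / 2 + (‖a'‖ ^ 2 + ‖b'‖ ^ 2) / 2 := by
  have ha := abs_real_inner_le_norm a a'
  have hb := abs_real_inner_le_norm b b'
  nlinarith [abs_add_le ⟪a, a'⟫ ⟪b, b'⟫, sq_nonneg (‖a‖ - ‖a'‖), sq_nonneg (‖b‖ - ‖b'‖)]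

theorem integral_integral_inner_add_inner [CompleteSpace E] {Ω : Type*} [MeasurableSpace Ω]
    {Q : Measure Ω} {F G : Ω → E} (hF : Integrable F Q) (hG : Integrable G Q) :
    ∫ x, ∫ x', (⟪F x, F x'⟫ + ⟪G x, G x'⟫) ∂Q ∂Q = ‖∫ x, F x ∂Q‖ ^ 2 + ‖∫ x, G x ∂Q‖ ^ 2 := by
  have hinner : ∀ x, ∫ x', (⟪F x, F x'⟫ + ⟪G x, G x'⟫) ∂Q
      = ⟪∫ x', F x' ∂Q, F x⟫ + ⟪∫ x', G x' ∂Q, G x⟫ := fun x => by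
    rw [integral_add (hF.const_inner _) (hG.const_inner _), integral_inner hF, integral_inner hG,
      real_inner_comm, real_inner_comm (G x)]
  rw [integral_congr_ae (ae_of_all _ hinner), integral_add (hF.const_inner _) (hG.const_inner _),
    integral_inner hF, integral_inner hG, real_inner_self_eq_norm_sq, real_inner_self_eq_norm_sq]

end InnerProductSpace

section Differentiation

variable {X : Type*} [NormedAddCommGroup X] [InnerProductSpace ℝ X] [MeasurableSpace X]
  [OpensMeasurableSpace X] {μ : Measure X}

theorem MeasureTheory.Integrable.comp_inner_smul {E : Type*} [NormedAddCommGroup E]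
    [NormedSpace ℝ E] {a : ℝ → ℝ} (ha : Continuous a) (ha_le : ∀ t, |a t| ≤ 1) {f : X → E}
    (hf : Integrable f μ) (z : X) : Integrable (fun u => a ⟪z, u⟫ • f u) μ :=
  hf.bdd_smul 1 (by fun_prop) (ae_of_all _ fun _ => ha_le _)

theorem MeasureTheory.Integrable.comp_inner_mul {a : ℝ → ℝ} (ha : Continuous a)
    (ha_le : ∀ t, |a t| ≤ 1) {p : X → ℝ} (hp : Integrable p μ) (z : X) :
    Integrable (fun u => a ⟪z, u⟫ * p u) μ :=
  hp.comp_inner_smul ha ha_le z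

theorem eq_integral_cos_of_ofReal_eq_integral_exp [IsFiniteMeasure μ] {k : X → X → ℝ}
    (hk : ∀ x y, (k x y : ℂ) = ∫ u, Complex.exp ((⟪x - y, u⟫ : ℂ) * Complex.I) ∂μ) :
    k = fun x y => ∫ u, Real.cos ⟪x - y, u⟫ ∂μ := by
  funext x y
  have hint : Integrable (fun u => Complex.exp ((⟪x - y, u⟫ : ℂ) * Complex.I)) μ :=
    .of_bound (by fun_prop) 1 (ae_of_all _ fun u => (Complex.norm_exp_ofReal_mul_I _).le)
  have h := congrArg Complex.re (hk x y)
  rw [Complex.ofReal_re, ← RCLike.re_to_complex, ← integral_re hint] at h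
  simpa [Complex.exp_ofReal_mul_I_re] using h

variable [SecondCountableTopology X] {a a' : ℝ → ℝ} {p : X → ℝ}

theorem integrable_smul_innerSL (hp : AEStronglyMeasurable p μ)
    (hup : Integrable (fun u => ‖u‖ * p u) μ) : Integrable (fun u => p u • innerSL ℝ u) μ := by
  have := secondCountableTopologyEither_of_left X (X →L[ℝ] ℝ)
  refine hup.norm.mono' (hp.smul (by fun_prop)) (ae_of_all _ fun u => ?_)
  rw [norm_smul, innerSL_apply_norm, norm_mul, norm_norm, mul_comm]

theorem hasFDerivAt_integral_comp_inner_mul (ha : ∀ t, HasDerivAt a (a' t) t)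
    (ha_le : ∀ t, |a t| ≤ 1) (ha' : Continuous a') (ha'_le : ∀ t, |a' t| ≤ 1)
    (hp : Integrable p μ) (hup : Integrable (fun u => ‖u‖ * p u) μ) (z : X) :
    HasFDerivAt (fun z => ∫ u, a ⟪z, u⟫ * p u ∂μ)
      (∫ u, a' ⟪z, u⟫ • p u • innerSL ℝ u ∂μ) z := by
  have ha_cont : Continuous a := continuous_iff_continuousAt.2 fun t => (ha t).continuousAt
  have hF' := integrable_smul_innerSL hp.1 hup
  refine hasFDerivAt_integral_of_dominated_of_fderiv_le (s := Set.univ)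
    (F' := fun z u => a' ⟪z, u⟫ • p u • innerSL ℝ u) (bound := fun u => ‖p u • innerSL ℝ u‖)
    univ_mem
    (Eventually.of_forall fun z => (hp.comp_inner_mul ha_cont ha_le z).aestronglyMeasurable)
    (hp.comp_inner_mul ha_cont ha_le z) (hF'.comp_inner_smul ha' ha'_le z).aestronglyMeasurable
    (ae_of_all _ fun u z _ => ?_) hF'.norm (ae_of_all _ fun u z _ => ?_)
  · rw [norm_smul, Real.norm_eq_abs]
    exact mul_le_of_le_one_left (norm_nonneg _) (ha'_le _)
  · have hinner : HasFDerivAt (fun z : X => ⟪z, u⟫) (innerSL ℝ u) z := by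
      convert (innerSL ℝ u).hasFDerivAt using 1
      exact funext fun z => real_inner_comm u z
    exact (((ha ⟪z, u⟫).comp_hasFDerivAt z hinner).mul_const (p u)).congr_fderiv
      (by rw [smul_comm])

theorem fderiv_integral_comp_inner_mul_apply (ha : ∀ t, HasDerivAt a (a' t) t)
    (ha_le : ∀ t, |a t| ≤ 1) (ha' : Continuous a') (ha'_le : ∀ t, |a' t| ≤ 1)
    (hp : Integrable p μ) (hup : Integrable (fun u => ‖u‖ * p u) μ) (z v : X) :
    fderiv ℝ (fun z => ∫ u, a ⟪z, u⟫ * p u ∂μ) z v = ∫ u, a' ⟪z, u⟫ * p u * ⟪u, v⟫ ∂μ := by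
  rw [(hasFDerivAt_integral_comp_inner_mul ha ha_le ha' ha'_le hp hup z).fderiv,
    ContinuousLinearMap.integral_apply
      ((integrable_smul_innerSL hp.1 hup).comp_inner_smul ha' ha'_le z)]
  simp only [FunLike.coe_smul, Pi.smul_apply, innerSL_apply_apply, smul_eq_mul, mul_assoc]

theorem fderiv_integral_comp_inner_const_sub_mul_apply (ha : ∀ t, HasDerivAt a (a' t) t)
    (ha_le : ∀ t, |a t| ≤ 1) (ha' : Continuous a') (ha'_le : ∀ t, |a' t| ≤ 1)
    (hp : Integrable p μ) (hup : Integrable (fun u => ‖u‖ * p u) μ) (x y v : X) :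
    fderiv ℝ (fun y => ∫ u, a ⟪x - y, u⟫ * p u ∂μ) y v
      = -∫ u, a' ⟪x - y, u⟫ * p u * ⟪u, v⟫ ∂μ := by
  have hΦ := hasFDerivAt_integral_comp_inner_mul ha ha_le ha' ha'_le hp hup (x - y)
  rw [HasFDerivAt.fderiv (f := fun y => ∫ u, a ⟪x - y, u⟫ * p u ∂μ)
    (hΦ.comp y ((hasFDerivAt_id y).const_sub x)), ← hΦ.fderiv,
    ← fderiv_integral_comp_inner_mul_apply ha ha_le ha' ha'_le hp hup]
  simp

variable [IsFiniteMeasure μ]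

theorem fderiv_integral_cos_inner_sub_apply (hμ : Integrable (fun u => u) μ) (x y v : X) :
    fderiv ℝ (fun x => ∫ u, Real.cos ⟪x - y, u⟫ ∂μ) x v
      = -∫ u, Real.sin ⟪x - y, u⟫ * ⟪u, v⟫ ∂μ := by
  have := fderiv_integral_comp_inner_mul_apply (μ := μ) Real.hasDerivAt_cos Real.abs_cos_le_one
    Real.continuous_sin.neg (by simpa using Real.abs_sin_le_one) (integrable_const 1)
    (by simpa using hμ.norm) (x - y) v
  rw [fderiv_comp_sub (f := fun z => ∫ u, Real.cos ⟪z, u⟫ ∂μ)]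
  simpa [integral_neg] using this

theorem fderiv_integral_cos_inner_const_sub_apply (hμ : Integrable (fun u => u) μ) (x y v : X) :
    fderiv ℝ (fun y => ∫ u, Real.cos ⟪x - y, u⟫ ∂μ) y v
      = ∫ u, Real.sin ⟪x - y, u⟫ * ⟪u, v⟫ ∂μ := by
  have := fderiv_integral_comp_inner_const_sub_mul_apply (μ := μ) Real.hasDerivAt_cos
    Real.abs_cos_le_one Real.continuous_sin.neg (by simpa using Real.abs_sin_le_one)
    (integrable_const 1) (by simpa using hμ.norm) x y v
  simpa [integral_neg] using this

theorem fderiv_fderiv_integral_cos_inner_sub_apply (hμ : MemLp (fun u => u) 2 μ) (x y v w : X) :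
    fderiv ℝ (fun y => fderiv ℝ (fun x => ∫ u, Real.cos ⟪x - y, u⟫ ∂μ) x v) y w
      = ∫ u, Real.cos ⟪x - y, u⟫ * ⟪u, v⟫ * ⟪u, w⟫ ∂μ := by
  have hμ1 : Integrable (fun u => u) μ := hμ.integrable one_le_two
  simp_rw [fderiv_integral_cos_inner_sub_apply hμ1]
  rw [fderiv_fun_neg, neg_apply, fderiv_integral_comp_inner_const_sub_mul_apply
    Real.hasDerivAt_sin Real.abs_sin_le_one Real.continuous_cos Real.abs_cos_le_one
    (hμ1.inner_const v) (hμ.norm.integrable_mul (hμ.inner_const v)), neg_neg]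

end Differentiation

section Spectral

variable {X : Type*} [NormedAddCommGroup X] [InnerProductSpace ℝ X] [CompleteSpace X]
  {C : X →L[ℝ] X} {ι : Type*} {l : ι → ℝ}

theorem IsSelfAdjoint.inner_apply_of_apply_eq_smul (hC : IsSelfAdjoint C) {v : X} {c : ℝ}
    (hv : C v = c • v) (u : X) : ⟪C u, v⟫ = c * ⟪u, v⟫ := by
  rw [show ⟪C u, v⟫ = ⟪u, C v⟫ from hC.isSymmetric u v, hv, real_inner_smul_right]

theorem IsSelfAdjoint.hasSum_sq_mul_inner_mul_inner (hC : IsSelfAdjoint C)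
    (e : HilbertBasis ι ℝ X) (hCe : ∀ i, C (e i) = l i • e i) (u : X) :
    HasSum (fun i => l i ^ 2 * (⟪u, e i⟫ * ⟪u, e i⟫)) (‖C u‖ ^ 2) := by
  have hterm : ∀ i, ⟪C u, e i⟫ * ⟪e i, C u⟫ = l i ^ 2 * (⟪u, e i⟫ * ⟪u, e i⟫) := fun i => by
    rw [real_inner_comm (C u) (e i), hC.inner_apply_of_apply_eq_smul (hCe i)]
    ring
  simpa only [hterm, real_inner_self_eq_norm_sq] using e.hasSum_inner_mul_inner (C u) (C u)

theorem IsSelfAdjoint.tsum_sq_mul_integral_mul_inner_mul_inner [MeasurableSpace X]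
    [OpensMeasurableSpace X] [Countable ι] {μ : Measure X} (hC : IsSelfAdjoint C)
    (e : HilbertBasis ι ℝ X) (hCe : ∀ i, C (e i) = l i • e i) (hl : Summable fun i => l i ^ 2)
    (hμ : Integrable (fun u => ‖u‖ ^ 2) μ) {c : X → ℝ} (hc : AEStronglyMeasurable c μ)
    (hc_le : ∀ u, |c u| ≤ 1) :
    ∑' i, l i ^ 2 * ∫ u, c u * ⟪u, e i⟫ * ⟪u, e i⟫ ∂μ = ∫ u, c u * ‖C u‖ ^ 2 ∂μ := by
  set F : ι → X → ℝ := fun i u => l i ^ 2 * (c u * ⟪u, e i⟫ * ⟪u, e i⟫)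
  have hF_le : ∀ i u, ‖F i u‖ ≤ l i ^ 2 * ‖u‖ ^ 2 := fun i u => by
    have h := abs_real_inner_le_norm u (e i)
    rw [e.orthonormal.1 i, mul_one] at h
    simp only [F, norm_mul, norm_pow, Real.norm_eq_abs, sq_abs]
    calc l i ^ 2 * (|c u| * |⟪u, e i⟫| * |⟪u, e i⟫|) ≤ l i ^ 2 * (1 * ‖u‖ * ‖u‖) := by
          gcongr; exact hc_le u
      _ = l i ^ 2 * ‖u‖ ^ 2 := by ring
  have hF_int : ∀ i, Integrable (F i) μ := fun i =>
    (hμ.const_mul (l i ^ 2)).mono' (by fun_prop) (ae_of_all _ (hF_le i))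
  have hF_sum : Summable fun i => ∫ u, ‖F i u‖ ∂μ := by
    refine (hl.mul_right (∫ u, ‖u‖ ^ 2 ∂μ)).of_nonneg_of_le
      (fun i => integral_nonneg fun _ => norm_nonneg _) fun i => ?_
    rw [← integral_const_mul]
    exact integral_mono (hF_int i).norm (hμ.const_mul _) (hF_le i)
  calc ∑' i, l i ^ 2 * ∫ u, c u * ⟪u, e i⟫ * ⟪u, e i⟫ ∂μ = ∑' i, ∫ u, F i u ∂μ := by
        simp only [F, integral_const_mul]
    _ = ∫ u, ∑' i, F i u ∂μ := integral_tsum_of_summable_integral_norm hF_int hF_sum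
    _ = ∫ u, c u * ‖C u‖ ^ 2 ∂μ := integral_congr_ae <| ae_of_all _ fun u =>
        ((hC.hasSum_sq_mul_inner_mul_inner e hCe u).mul_left (c u)).congr_fun (fun i => by ring)
          |>.tsum_eq

end Spectral

section SteinFeature

variable {X : Type*} [NormedAddCommGroup X] [InnerProductSpace ℝ X] (C : X →L[ℝ] X)

-- `steinFeatureRe C s x + i • steinFeatureIm C s x = e^{i⟪s, x⟫} (C s + i x)` in `X_ℂ`
noncomputable def steinFeatureRe (s x : X) : X :=
  Real.cos ⟪s, x⟫ • C s + (-Real.sin ⟪s, x⟫) • x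

noncomputable def steinFeatureIm (s x : X) : X :=
  Real.sin ⟪s, x⟫ • C s + Real.cos ⟪s, x⟫ • x

theorem norm_sq_steinFeatureRe_add_norm_sq_steinFeatureIm (s x : X) :
    ‖steinFeatureRe C s x‖ ^ 2 + ‖steinFeatureIm C s x‖ ^ 2 = ‖C s‖ ^ 2 + ‖x‖ ^ 2 := by
  simp only [← real_inner_self_eq_norm_sq, steinFeatureRe, steinFeatureIm, inner_add_left,
    inner_add_right, real_inner_smul_left, real_inner_smul_right, real_inner_comm x (C s)]
  linear_combination (⟪C s, C s⟫ + ⟪x, x⟫) * Real.sin_sq_add_cos_sq ⟪s, x⟫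

theorem inner_steinFeatureRe_add_inner_steinFeatureIm (s x x' : X) :
    ⟪steinFeatureRe C s x, steinFeatureRe C s x'⟫ + ⟪steinFeatureIm C s x, steinFeatureIm C s x'⟫
      = Real.cos ⟪x - x', s⟫ * ‖C s‖ ^ 2 + Real.sin ⟪x - x', s⟫ * ⟪C s, x'⟫
        - Real.sin ⟪x - x', s⟫ * ⟪C s, x⟫ + Real.cos ⟪x - x', s⟫ * ⟪x, x'⟫ := by
  rw [inner_sub_left, real_inner_comm s x, real_inner_comm s x', Real.cos_sub, Real.sin_sub]
  simp only [← real_inner_self_eq_norm_sq, steinFeatureRe, steinFeatureIm, inner_add_left,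
    inner_add_right, real_inner_smul_left, real_inner_smul_right, real_inner_comm x (C s),
    real_inner_comm x' (C s)]
  ring

variable [MeasurableSpace X] [OpensMeasurableSpace X] {Q : Measure X} [IsFiniteMeasure Q]

theorem integrable_steinFeatureRe (hQ : Integrable (fun x => x) Q) (s : X) :
    Integrable (fun x => steinFeatureRe C s x) Q :=
  ((integrable_const (C s)).comp_inner_smul Real.continuous_cos Real.abs_cos_le_one s).add
    (hQ.comp_inner_smul Real.continuous_sin.neg (by simpa using Real.abs_sin_le_one) s)

theorem integrable_steinFeatureIm (hQ : Integrable (fun x => x) Q) (s : X) :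
    Integrable (fun x => steinFeatureIm C s x) Q :=
  ((integrable_const (C s)).comp_inner_smul Real.continuous_sin Real.abs_sin_le_one s).add
    (hQ.comp_inner_smul Real.continuous_cos Real.abs_cos_le_one s)

theorem integral_steinFeatureRe [CompleteSpace X] (hQ : Integrable (fun x => x) Q) (s : X) :
    ∫ x, steinFeatureRe C s x ∂Q
      = (∫ x, Real.cos ⟪s, x⟫ ∂Q) • C s + ∫ x, (-Real.sin ⟪s, x⟫) • x ∂Q := by
  rw [← integral_smul_const]
  exact integral_add
    ((integrable_const (C s)).comp_inner_smul Real.continuous_cos Real.abs_cos_le_one s)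
    (hQ.comp_inner_smul Real.continuous_sin.neg (by simpa using Real.abs_sin_le_one) s)

theorem integral_steinFeatureIm [CompleteSpace X] (hQ : Integrable (fun x => x) Q) (s : X) :
    ∫ x, steinFeatureIm C s x ∂Q
      = (∫ x, Real.sin ⟪s, x⟫ ∂Q) • C s + ∫ x, Real.cos ⟪s, x⟫ • x ∂Q := by
  rw [← integral_smul_const]
  exact integral_add
    ((integrable_const (C s)).comp_inner_smul Real.continuous_sin Real.abs_sin_le_one s)
    (hQ.comp_inner_smul Real.continuous_cos Real.abs_cos_le_one s)

theorem integrable_inner_steinFeatureRe_add_inner_steinFeatureIm [SecondCountableTopology X]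
    {μ : Measure X} [IsFiniteMeasure μ] (hQ : Integrable (fun x => ‖x‖ ^ 2) Q)
    (hμ : MemLp (fun s => s) 2 μ) :
    Integrable (fun p : (X × X) × X => ⟪steinFeatureRe C p.2 p.1.1, steinFeatureRe C p.2 p.1.2⟫
      + ⟪steinFeatureIm C p.2 p.1.1, steinFeatureIm C p.2 p.1.2⟫) ((Q.prod Q).prod μ) := by
  have h₀ := (C.integrable_norm_sq_comp hμ).comp_snd (Q.prod Q)
  have h₁ := (hQ.comp_fst Q).comp_fst μ
  have h₂ := (hQ.comp_snd Q).comp_fst μ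
  refine Integrable.mono' (g := fun p => (‖C p.2‖ ^ 2 + ‖p.1.1‖ ^ 2) / 2
      + (‖C p.2‖ ^ 2 + ‖p.1.2‖ ^ 2) / 2) (by fun_prop)
    (by simp only [steinFeatureRe, steinFeatureIm]; fun_prop) (ae_of_all _ fun p => ?_)
  rw [Real.norm_eq_abs, ← norm_sq_steinFeatureRe_add_norm_sq_steinFeatureIm,
    ← norm_sq_steinFeatureRe_add_norm_sq_steinFeatureIm]
  exact abs_inner_add_inner_le _ _ _ _

theorem steinKernelHvGauss_eq_integral_inner_steinFeature [CompleteSpace X]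
    [SecondCountableTopology X] {μ : Measure X} [IsFiniteMeasure μ] (hC : IsSelfAdjoint C) (e : HilbertBasis ℕ ℝ X) {l : ℕ → ℝ} (hCe : ∀ i, C (e i) = l i • e i)
    (hl : Summable fun i => l i ^ 2) (hμ : MemLp (fun u => u) 2 μ) (x x' : X) :
    steinKernelHvGauss (fun x y => ∫ u, Real.cos ⟪x - y, u⟫ ∂μ) C (fun i => e i) l x x'
      = ∫ s, (⟪steinFeatureRe C s x, steinFeatureRe C s x'⟫
          + ⟪steinFeatureIm C s x, steinFeatureIm C s x'⟫) ∂μ := by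
  have hμ1 : Integrable (fun u => u) μ := hμ.integrable one_le_two
  have hμ2 : Integrable (fun u => ‖u‖ ^ 2) μ := (memLp_two_iff_integrable_sq_norm hμ.1).1 hμ
  have h1 := (C.integrable_norm_sq_comp hμ).comp_inner_mul Real.continuous_cos
    Real.abs_cos_le_one (x - x')
  have h2 := (hμ1.inner_const (C x')).comp_inner_mul Real.continuous_sin Real.abs_sin_le_one
    (x - x')
  have h3 := (hμ1.inner_const (C x)).comp_inner_mul Real.continuous_sin Real.abs_sin_le_one
    (x - x')
  have h4 := (integrable_const ⟪x, x'⟫).comp_inner_mul Real.continuous_cos Real.abs_cos_le_one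
    (μ := μ) (x - x')
  have hsym : ∀ a b, ⟪C a, b⟫ = ⟪a, C b⟫ := hC.isSymmetric
  simp only [steinKernelHvGauss, fderiv_fderiv_integral_cos_inner_sub_apply hμ]
  simp only [fderiv_integral_cos_inner_sub_apply hμ1, fderiv_integral_cos_inner_const_sub_apply hμ1]
  simp_rw [inner_steinFeatureRe_add_inner_steinFeatureIm, hsym]
  rw [hC.tsum_sq_mul_integral_mul_inner_mul_inner e hCe hl hμ2 (by fun_prop)
    (fun _ => Real.abs_cos_le_one _), integral_add, integral_sub, integral_add, integral_mul_const]
  · ring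
  all_goals fun_prop

end SteinFeature

/-- `Cs Q̂(s) + DQ̂(s) ∈ X_ℂ` enters through its real and imaginary parts, whose squared norms
add up to its squared `X_ℂ`-norm. -/
theorem ksd_gaussian_stein_tikhomirov_general
    {X : Type*} [NormedAddCommGroup X] [InnerProductSpace ℝ X] [CompleteSpace X]
    [MeasurableSpace X] [BorelSpace X] [SecondCountableTopology X]
    -- the covariance operator and its eigendecomposition
    (C : X →L[ℝ] X) (hCsa : IsSelfAdjoint C)
    (e : HilbertBasis ℕ ℝ X) (l : ℕ → ℝ)
    (hCe : ∀ i, C (e i) = l i • e i) (hltr : Summable l)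
    -- the candidate measure `Q` and its moment condition
    (Q : Measure X) [IsProbabilityMeasure Q]
    (hQ2 : Integrable (fun x => ‖x‖ ^ 2) Q)
    -- the spectral measure `μ` and the kernel `k`
    (μ : Measure X) [IsFiniteMeasure μ]
    (hμ2 : Integrable (fun s => ‖s‖ ^ 2) μ)
    (k : X → X → ℝ)
    (hk : ∀ x y : X, (k x y : ℂ) = ∫ u, Complex.exp ((⟪x - y, u⟫ : ℂ) * Complex.I) ∂μ) :
    ∫ x, ∫ x', steinKernelHvGauss k C (fun i => e i) l x x' ∂Q ∂Q
      = ∫ s,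
          (‖(∫ x, Real.cos ⟪s, x⟫ ∂Q) • C s + ∫ x, (-Real.sin ⟪s, x⟫) • x ∂Q‖ ^ 2
          + ‖(∫ x, Real.sin ⟪s, x⟫ ∂Q) • C s + ∫ x, Real.cos ⟪s, x⟫ • x ∂Q‖ ^ 2) ∂μ := by
  have hQ : Integrable (fun x : X => x) Q :=
    ((memLp_two_iff_integrable_sq_norm aestronglyMeasurable_id).2 hQ2).integrable one_le_two
  have hμ : MemLp (fun s : X => s) 2 μ :=
    (memLp_two_iff_integrable_sq_norm aestronglyMeasurable_id).2 hμ2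
  obtain rfl := eq_integral_cos_of_ofReal_eq_integral_exp hk
  calc _ = ∫ x, ∫ x', ∫ s, (⟪steinFeatureRe C s x, steinFeatureRe C s x'⟫
          + ⟪steinFeatureIm C s x, steinFeatureIm C s x'⟫) ∂μ ∂Q ∂Q := by
        simp only [steinKernelHvGauss_eq_integral_inner_steinFeature C hCsa e hCe hltr.sq hμ]
    _ = ∫ s, ∫ x, ∫ x', (⟪steinFeatureRe C s x, steinFeatureRe C s x'⟫
          + ⟪steinFeatureIm C s x, steinFeatureIm C s x'⟫) ∂Q ∂Q ∂μ :=
        integral_integral_integral_swap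
          (integrable_inner_steinFeatureRe_add_inner_steinFeatureIm C hQ2 hμ)
    _ = _ := by
        congr 1 with s
        rw [integral_integral_inner_add_inner (integrable_steinFeatureRe C hQ s)
          (integrable_steinFeatureIm C hQ s), integral_steinFeatureRe C hQ,
          integral_steinFeatureIm C hQ]

/-- **Stein–Tikhomirov form of the spectral representation for a Gaussian target**
(Remark 4): the KSD with target `N_C` equals
`∫ ‖Cs Q̂(s) + DQ̂(s)‖²_{X_ℂ} dμ(s)`, where `Q̂(s) = ∫ e^{i⟪s,x⟫} dQ(x)` and
`DQ̂(s) = i ∫ x e^{i⟪s,x⟫} dQ(x)`.  The element `Cs Q̂(s) + DQ̂(s)` of the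
complexification `X_ℂ` has real part `(∫ cos⟪s,x⟫ dQ) • Cs + ∫ (-sin⟪s,x⟫) • x dQ`
and imaginary part `(∫ sin⟪s,x⟫ dQ) • Cs + ∫ cos⟪s,x⟫ • x dQ`, and its squared
`X_ℂ`-norm is the sum of the squared norms of these two parts. -/
theorem ksd_gaussian_stein_tikhomirov
    {X : Type*} [NormedAddCommGroup X] [InnerProductSpace ℝ X] [CompleteSpace X]
    [MeasurableSpace X] [BorelSpace X] [SecondCountableTopology X]
    -- the covariance operator and its eigendecomposition
    (C : X →L[ℝ] X) (hCsa : IsSelfAdjoint C)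
    (e : HilbertBasis ℕ ℝ X) (l : ℕ → ℝ) (hl : ∀ i, 0 < l i)
    (hCe : ∀ i, C (e i) = l i • e i) (hltr : Summable l)
    -- the candidate measure `Q` and its moment condition
    (Q : Measure X) [IsProbabilityMeasure Q]
    (hQ2 : Integrable (fun x => ‖x‖ ^ 2) Q)
    -- the spectral measure `μ` and the kernel `k`
    (μ : Measure X) [IsFiniteMeasure μ]
    (hμsymm : Measure.map (fun u => -u) μ = μ)
    (hμ2 : Integrable (fun s => ‖s‖ ^ 2) μ)
    (k : X → X → ℝ)
    (hk : ∀ x y : X, (k x y : ℂ) = ∫ u, Complex.exp ((⟪x - y, u⟫ : ℂ) * Complex.I) ∂μ) :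
    ∫ x, ∫ x', steinKernelHvGauss k C (fun i => e i) l x x' ∂Q ∂Q
      = ∫ s,
          (‖(∫ x, Real.cos ⟪s, x⟫ ∂Q) • C s + ∫ x, (-Real.sin ⟪s, x⟫) • x ∂Q‖ ^ 2
          + ‖(∫ x, Real.sin ⟪s, x⟫ ∂Q) • C s + ∫ x, Real.cos ⟪s, x⟫ • x ∂Q‖ ^ 2) ∂μ :=
  ksd_gaussian_stein_tikhomirov_general C hCsa e l hCe hltr Q hQ2 μ hμ2 k hk
end

section
/- Finite-dimensional spectral representation of the vectorised Langevin kernel Stein discrepancy: under the stated conditions, ∫_{ℝ^d} ∫_{ℝ^d} h_v(x,y) q(x) q(y) dx dy = ∫_{ℝ^d} ‖ s · q̂(s) − i ∫_{ℝ^d} ∇ log p(x) e^{i⟨s,x⟩} q(x) dx ‖²_{ℂ^d} dμ(s), where q̂(s) = ∫_{ℝ^d} q(x) e^{i⟨s,x⟩} dx. -/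
/-!
With `k(x,y) = Re μ̂(x - y) = ∫ cos⟪u, x - y⟫ dμ(u)`, differentiating under the integral sign
gives `h_v(x,y) = ∫ ⟪φ_u(x), φ_u(y)⟫ dμ(u)` for the feature `φ_u(x) = e^{i⟪u,x⟫}(u - i ∇log p(x))`,
read as a real vector in `ℝ^d × ℝ^d`. Fubini turns `∫∫ h_v(x,y) q(x) q(y)` into
`∫ ‖∫ q(x) φ_u(x) dx‖² dμ(u)`, and `∫ q φ_u` is the vector of the statement.
-/

open MeasureTheory ProbabilityTheory Complex Filter
open scoped RealInnerProductSpace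

/-- The vectorised Langevin Stein kernel on `ℝ^d`:
`h_v(x,y) = ∑ᵢ ∂_{xᵢ}∂_{yᵢ}k(x,y) + ⟪∇log p(x), ∇_y k(x,y)⟫ + ⟪∇log p(y), ∇_x k(x,y)⟫
  + k(x,y)⟪∇log p(x), ∇log p(y)⟫`, where `glp = ∇ log p`. -/
noncomputable def langevinHv {d : ℕ}
    (k : EuclideanSpace ℝ (Fin d) → EuclideanSpace ℝ (Fin d) → ℝ)
    (glp : EuclideanSpace ℝ (Fin d) → EuclideanSpace ℝ (Fin d))
    (x y : EuclideanSpace ℝ (Fin d)) : ℝ :=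
  (∑ i : Fin d,
      fderiv ℝ (fun y1 => fderiv ℝ (fun x1 => k x1 y1) x (EuclideanSpace.single i 1)) y
        (EuclideanSpace.single i 1))
  + fderiv ℝ (fun y1 => k x y1) y (glp x)
  + fderiv ℝ (fun x1 => k x1 y) x (glp y)
  + k x y * ⟪glp x, glp y⟫

theorem integral_withLp_toLp_prod {X E F : Type*} [MeasurableSpace X] {ν : Measure X}
    [NormedAddCommGroup E] [NormedSpace ℝ E] [CompleteSpace E]
    [NormedAddCommGroup F] [NormedSpace ℝ F] [CompleteSpace F]
    (p : ENNReal) [Fact (1 ≤ p)] {f : X → E} {g : X → F} (hf : Integrable f ν)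
    (hg : Integrable g ν) :
    ∫ x, WithLp.toLp p (f x, g x) ∂ν = WithLp.toLp p (∫ x, f x ∂ν, ∫ x, g x ∂ν) := by
  rw [← integral_pair hf hg]
  exact (WithLp.prodContinuousLinearEquiv p ℝ E F).symm.integral_comp_comm fun x ↦ (f x, g x)

theorem fderiv_comp_const_sub {𝕜 E F : Type*} [NontriviallyNormedField 𝕜]
    [NormedAddCommGroup E] [NormedSpace 𝕜 E] [NormedAddCommGroup F] [NormedSpace 𝕜 F]
    (h : E → F) (a y : E) :
    fderiv 𝕜 (fun y ↦ h (a - y)) y = -fderiv 𝕜 h (a - y) := by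
  have := fderiv_comp_sub (𝕜 := 𝕜) (f := h ∘ ContinuousLinearEquiv.neg 𝕜) a (x := y)
  rw [ContinuousLinearEquiv.comp_right_fderiv] at this
  ext v
  simpa [neg_sub] using congrArg (fun L ↦ L v) this

theorem measurable_of_hasGradientAt {F : Type*} [NormedAddCommGroup F] [InnerProductSpace ℝ F]
    [CompleteSpace F] [MeasurableSpace F] [BorelSpace F] {f : F → ℝ} {g : F → F}
    (hg : ∀ x, HasGradientAt f (g x) x) : Measurable g := by
  rw [show g = gradient f from funext fun x ↦ (hg x).gradient.symm]
  exact (InnerProductSpace.toDual ℝ F).symm.continuous.measurable.comp (measurable_fderiv ℝ f)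

theorem integrable_norm_of_integrable_norm_sq {X : Type*} [NormedAddCommGroup X]
    [MeasurableSpace X] [OpensMeasurableSpace X] {μ : Measure X} [IsFiniteMeasure μ]
    (hμ2 : Integrable (fun u : X ↦ ‖u‖ ^ 2) μ) :
    Integrable (fun u : X ↦ ‖u‖) μ :=
  ((memLp_two_iff_integrable_sq (by fun_prop)).2 hμ2).integrable one_le_two

theorem integrable_mul_norm_of_integrable_norm_sq_mul {X F : Type*} [MeasurableSpace X]
    {ν : Measure X} [NormedAddCommGroup F] {q : X → ℝ} {g : X → F} (hq : Integrable q ν)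
    (hg : AEStronglyMeasurable g ν) (hgq : Integrable (fun x ↦ ‖g x‖ ^ 2 * q x) ν) :
    Integrable (fun x ↦ q x * ‖g x‖) ν := by
  refine (hq.norm.add hgq.norm).mono' (hq.1.mul hg.norm) (ae_of_all _ fun x ↦ ?_)
  change ‖q x * ‖g x‖‖ ≤ ‖q x‖ + ‖‖g x‖ ^ 2 * q x‖
  rw [norm_mul, norm_norm, norm_mul, norm_pow, norm_norm]
  nlinarith [norm_nonneg (q x), norm_nonneg (g x), sq_nonneg (‖g x‖ - 1)]

section InnerProductSpace

variable {X U V : Type*} [MeasurableSpace X] [MeasurableSpace U]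
  [NormedAddCommGroup V] [InnerProductSpace ℝ V] [CompleteSpace V]
  {ν : Measure X} {μ : Measure U}

theorem integral_integral_inner_self {f : X → V} (hf : Integrable f ν) :
    ∫ x, ∫ y, ⟪f x, f y⟫ ∂ν ∂ν = ‖∫ x, f x ∂ν‖ ^ 2 := by
  simp only [integral_inner (𝕜 := ℝ) hf (f _), real_inner_comm (∫ x, f x ∂ν)]
  rw [integral_inner (𝕜 := ℝ) hf, real_inner_self_eq_norm_sq]

theorem integral_integral_integral_inner_eq_integral_norm_sq [SFinite ν] [SFinite μ]
    {Φ : X → U → V} (hΦ : AEStronglyMeasurable (Function.uncurry Φ) (ν.prod μ))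
    {a : X → ℝ} {b : U → ℝ} (ha : Integrable a ν) (hb : Integrable (fun u ↦ b u ^ 2) μ)
    (hΦle : ∀ x u, ‖Φ x u‖ ≤ a x * b u) :
    ∫ x, ∫ y, ∫ u, ⟪Φ x u, Φ y u⟫ ∂μ ∂ν ∂ν = ∫ u, ‖∫ x, Φ x u ∂ν‖ ^ 2 ∂μ := by
  have hF : Integrable (fun z : (X × X) × U ↦ ⟪Φ z.1.1 z.2, Φ z.1.2 z.2⟫)
      ((ν.prod ν).prod μ) := by
    refine ((ha.mul_prod ha).mul_prod hb).mono' ?_ (ae_of_all _ fun z ↦ ?_)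
    · exact (hΦ.comp_quasiMeasurePreserving (by fun_prop :
        Measure.QuasiMeasurePreserving (Prod.map Prod.fst id) _ (ν.prod μ))).inner
        (hΦ.comp_quasiMeasurePreserving (by fun_prop :
          Measure.QuasiMeasurePreserving (Prod.map Prod.snd id) _ (ν.prod μ)))
    · calc ‖⟪Φ z.1.1 z.2, Φ z.1.2 z.2⟫‖ ≤ ‖Φ z.1.1 z.2‖ * ‖Φ z.1.2 z.2‖ :=
            norm_inner_le_norm _ _
        _ ≤ (a z.1.1 * b z.2) * (a z.1.2 * b z.2) :=
            mul_le_mul (hΦle _ _) (hΦle _ _) (norm_nonneg _) ((norm_nonneg _).trans (hΦle _ _))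
        _ = a z.1.1 * a z.1.2 * b z.2 ^ 2 := by ring
  have hslice : ∀ᵐ u ∂μ, Integrable (fun x ↦ Φ x u) ν := by
    filter_upwards [hΦ.prod_swap.prodMk_left] with u hu
    exact (ha.mul_const (b u)).mono' hu (ae_of_all _ fun x ↦ hΦle x u)
  calc ∫ x, ∫ y, ∫ u, ⟪Φ x u, Φ y u⟫ ∂μ ∂ν ∂ν
      = ∫ z : X × X, ∫ u, ⟪Φ z.1 u, Φ z.2 u⟫ ∂μ ∂ν.prod ν :=
        (integral_prod _ hF.integral_prod_left).symm
    _ = ∫ u, ∫ z : X × X, ⟪Φ z.1 u, Φ z.2 u⟫ ∂ν.prod ν ∂μ := integral_integral_swap hF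
    _ = ∫ u, ‖∫ x, Φ x u ∂ν‖ ^ 2 ∂μ := by
        refine integral_congr_ae ?_
        filter_upwards [hslice, hF.prod_left_ae] with u hu hFu
        rw [integral_prod _ hFu, integral_integral_inner_self hu]

end InnerProductSpace

section CharFun

variable {E : Type*} [NormedAddCommGroup E] [InnerProductSpace ℝ E]

theorem norm_mul_smul_innerSL_le {c : ℝ} (hc : |c| ≤ 1) (a : ℝ) (u : E) :
    ‖(c * a) • innerSL ℝ u‖ ≤ ‖‖u‖ * a‖ := by
  rw [norm_smul, innerSL_apply_norm, norm_mul, norm_mul, norm_norm, Real.norm_eq_abs c]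
  calc |c| * ‖a‖ * ‖u‖ ≤ 1 * ‖a‖ * ‖u‖ := by gcongr
    _ = ‖u‖ * ‖a‖ := by ring

variable [MeasurableSpace E] [BorelSpace E] {μ : Measure E}

theorem re_charFun [IsFiniteMeasure μ] (t : E) :
    (charFun μ t).re = ∫ u, Real.cos ⟪u, t⟫ ∂μ := by
  have hint : Integrable (fun u ↦ Complex.exp (⟪u, t⟫ * Complex.I)) μ :=
    (integrable_const (1 : ℝ)).mono (by fun_prop) (by simp)
  rw [charFun_apply, ← RCLike.re_to_complex, ← integral_re hint]
  simp [Complex.exp_ofReal_mul_I_re]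

variable [SecondCountableTopology E] {f f' : ℝ → ℝ} {φ : E → ℝ}

theorem integrable_comp_inner_mul_smul_innerSL (hf' : Continuous f') (hf'b : ∀ t, |f' t| ≤ 1)
    (hφ : AEStronglyMeasurable φ μ) (hφ' : Integrable (fun u ↦ ‖u‖ * φ u) μ) (z : E) :
    Integrable (fun u ↦ (f' ⟪u, z⟫ * φ u) • innerSL ℝ u) μ := by
  refine hφ'.norm.mono' ?_ (ae_of_all _ fun u ↦ norm_mul_smul_innerSL_le (hf'b _) _ u)
  refine ((innerSL ℝ).continuous.comp_aestronglyMeasurable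
    (((by fun_prop : Continuous fun u ↦ f' ⟪u, z⟫).aestronglyMeasurable.mul hφ).smul
      aestronglyMeasurable_id)).congr (ae_of_all _ fun u ↦ ?_)
  exact map_smul (innerSL ℝ) _ u

theorem hasFDerivAt_integral_comp_inner_mul_s9 (hf : ∀ t, HasDerivAt f (f' t) t)
    (hfb : ∀ t, |f t| ≤ 1) (hf' : Continuous f') (hf'b : ∀ t, |f' t| ≤ 1)
    (hφ : Integrable φ μ) (hφ' : Integrable (fun u ↦ ‖u‖ * φ u) μ) (z : E) :
    HasFDerivAt (fun z ↦ ∫ u, f ⟪u, z⟫ * φ u ∂μ)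
      (∫ u, (f' ⟪u, z⟫ * φ u) • innerSL ℝ u ∂μ) z := by
  have hfc : Continuous f := continuous_iff_continuousAt.2 fun t ↦ (hf t).continuousAt
  have hF : ∀ w, Integrable (fun u ↦ f ⟪u, w⟫ * φ u) μ := fun w ↦
    hφ.bdd_mul (by fun_prop) (ae_of_all _ fun u ↦ (Real.norm_eq_abs _).trans_le (hfb _))
  refine hasFDerivAt_integral_of_dominated_of_fderiv_le
    (F' := fun w u ↦ (f' ⟪u, w⟫ * φ u) • innerSL ℝ u) (bound := fun u ↦ ‖‖u‖ * φ u‖)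
    (s := Set.univ) Filter.univ_mem (Filter.Eventually.of_forall fun w ↦ (hF w).1) (hF z)
    (integrable_comp_inner_mul_smul_innerSL hf' hf'b hφ.1 hφ' z).1
    (ae_of_all _ fun u w _ ↦ norm_mul_smul_innerSL_le (hf'b _) _ u) hφ'.norm
    (ae_of_all _ fun u w _ ↦ ?_)
  simpa [Function.comp_def, smul_smul, mul_comm] using
    ((hf ⟪u, w⟫).comp_hasFDerivAt w (innerSL ℝ u).hasFDerivAt).mul_const (φ u)

theorem fderiv_integral_comp_inner_mul_apply_s9 (hf : ∀ t, HasDerivAt f (f' t) t)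
    (hfb : ∀ t, |f t| ≤ 1) (hf' : Continuous f') (hf'b : ∀ t, |f' t| ≤ 1)
    (hφ : Integrable φ μ) (hφ' : Integrable (fun u ↦ ‖u‖ * φ u) μ) (z v : E) :
    fderiv ℝ (fun z ↦ ∫ u, f ⟪u, z⟫ * φ u ∂μ) z v = ∫ u, f' ⟪u, z⟫ * φ u * ⟪u, v⟫ ∂μ := by
  rw [(hasFDerivAt_integral_comp_inner_mul_s9 hf hfb hf' hf'b hφ hφ' z).fderiv,
    ContinuousLinearMap.integral_apply
      (integrable_comp_inner_mul_smul_innerSL hf' hf'b hφ.1 hφ' z)]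
  simp

theorem integrable_inner_left (hμ1 : Integrable (fun u : E ↦ ‖u‖) μ) (v : E) :
    Integrable (fun u ↦ ⟪u, v⟫) μ :=
  (hμ1.mul_const ‖v‖).mono' (by fun_prop) (ae_of_all _ fun u ↦ norm_inner_le_norm u v)

theorem integrable_inner_mul_inner (hμ2 : Integrable (fun u : E ↦ ‖u‖ ^ 2) μ) (v w : E) :
    Integrable (fun u ↦ ⟪u, v⟫ * ⟪u, w⟫) μ := by
  refine (hμ2.mul_const (‖v‖ * ‖w‖)).mono' (by fun_prop) (ae_of_all _ fun u ↦ ?_)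
  rw [norm_mul, sq, mul_mul_mul_comm]
  exact mul_le_mul (norm_inner_le_norm u v) (norm_inner_le_norm u w) (norm_nonneg _)
    (by positivity)

variable [IsFiniteMeasure μ]

theorem fderiv_re_charFun_apply (hμ1 : Integrable (fun u : E ↦ ‖u‖) μ) (z v : E) :
    fderiv ℝ (fun z ↦ (charFun μ z).re) z v = ∫ u, -Real.sin ⟪u, z⟫ * ⟪u, v⟫ ∂μ := by
  have hK : (fun z ↦ (charFun μ z).re) = fun z ↦ ∫ u, Real.cos ⟪u, z⟫ * 1 ∂μ := by
    simp [re_charFun]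
  rw [hK, fderiv_integral_comp_inner_mul_apply_s9 (φ := fun _ ↦ 1) Real.hasDerivAt_cos
    Real.abs_cos_le_one Real.continuous_sin.neg (by simp [Real.abs_sin_le_one])
    (integrable_const 1) (by simpa using hμ1) z v]
  simp

theorem fderiv_fderiv_re_charFun_apply (hμ2 : Integrable (fun u : E ↦ ‖u‖ ^ 2) μ) (z v w : E) :
    fderiv ℝ (fun z ↦ fderiv ℝ (fun z ↦ (charFun μ z).re) z v) z w
      = ∫ u, -Real.cos ⟪u, z⟫ * ⟪u, v⟫ * ⟪u, w⟫ ∂μ := by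
  have hμ1 := integrable_norm_of_integrable_norm_sq hμ2
  have hφ' : Integrable (fun u : E ↦ ‖u‖ * ⟪u, v⟫) μ := by
    refine (hμ2.mul_const ‖v‖).mono' (by fun_prop) (ae_of_all _ fun u ↦ ?_)
    rw [norm_mul, norm_norm, sq, mul_assoc]
    exact mul_le_mul_of_nonneg_left (norm_inner_le_norm u v) (norm_nonneg u)
  simp only [fderiv_re_charFun_apply hμ1]
  exact fderiv_integral_comp_inner_mul_apply_s9 (fun t ↦ (Real.hasDerivAt_sin t).neg)
    (by simp [Real.abs_sin_le_one]) Real.continuous_cos.neg (by simp [Real.abs_cos_le_one])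
    (integrable_inner_left hμ1 v) hφ' z w

theorem fderiv_fderiv_re_charFun_sub_apply (hμ2 : Integrable (fun u : E ↦ ‖u‖ ^ 2) μ)
    (x y v w : E) :
    fderiv ℝ (fun y1 ↦ fderiv ℝ (fun x1 ↦ (charFun μ (x1 - y1)).re) x v) y w
      = ∫ u, Real.cos ⟪u, x - y⟫ * (⟪u, v⟫ * ⟪u, w⟫) ∂μ := by
  have hx : ∀ y1, fderiv ℝ (fun x1 ↦ (charFun μ (x1 - y1)).re) x
      = fderiv ℝ (fun z ↦ (charFun μ z).re) (x - y1) := fun y1 ↦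
    fderiv_comp_sub (f := fun z ↦ (charFun μ z).re) y1
  simp only [hx]
  rw [fderiv_comp_const_sub (fun z ↦ fderiv ℝ (fun z ↦ (charFun μ z).re) z v),
    neg_apply, fderiv_fderiv_re_charFun_apply hμ2, ← integral_neg]
  simp only [neg_mul, neg_neg, mul_assoc]

end CharFun

section SteinFeature

variable {E : Type*} [NormedAddCommGroup E] [InnerProductSpace ℝ E]

/-- `e^{i⟪u,x⟫} (u - i g x) ∈ E ⊗ ℂ`, stored as its real and imaginary parts. -/
noncomputable def steinFeature (g : E → E) (x u : E) : WithLp 2 (E × E) :=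
  WithLp.toLp 2 (Real.cos ⟪u, x⟫ • u + Real.sin ⟪u, x⟫ • g x,
    Real.sin ⟪u, x⟫ • u - Real.cos ⟪u, x⟫ • g x)

theorem inner_steinFeature (g : E → E) (x y u : E) :
    ⟪steinFeature g x u, steinFeature g y u⟫
      = Real.cos ⟪u, x - y⟫ * (‖u‖ ^ 2 + ⟪g x, g y⟫)
        + Real.sin ⟪u, x - y⟫ * (⟪u, g x⟫ - ⟪u, g y⟫) := by
  simp only [steinFeature, WithLp.prod_inner_apply, inner_add_left, inner_add_right,
    inner_sub_left, inner_sub_right, real_inner_smul_left, real_inner_smul_right,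
    real_inner_self_eq_norm_sq, Real.cos_sub, Real.sin_sub, real_inner_comm (g x) u]
  ring

theorem norm_steinFeature_le (g : E → E) (x u : E) :
    ‖steinFeature g x u‖ ≤ ‖u‖ + ‖g x‖ := by
  have h := inner_steinFeature g x x u
  rw [real_inner_self_eq_norm_sq, real_inner_self_eq_norm_sq, sub_self, inner_zero_right,
    Real.cos_zero, Real.sin_zero] at h
  refine le_of_sq_le_sq ?_ (by positivity)
  nlinarith [norm_nonneg u, norm_nonneg (g x)]

variable [MeasurableSpace E] [BorelSpace E] {ν : Measure E} {q : E → ℝ} {g : E → E}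

theorem integrable_mul_comp_inner_smul {c : ℝ → ℝ} (hc : Continuous c) (hcb : ∀ t, |c t| ≤ 1)
    (hq : AEStronglyMeasurable q ν) (hg : AEStronglyMeasurable g ν)
    (hqg : Integrable (fun x ↦ q x * ‖g x‖) ν) (u : E) :
    Integrable (fun x ↦ (q x * c ⟪u, x⟫) • g x) ν := by
  refine hqg.norm.mono' ((hq.mul (by fun_prop)).smul hg) (ae_of_all _ fun x ↦ ?_)
  rw [norm_smul, norm_mul, norm_mul, norm_norm, Real.norm_eq_abs (c _), mul_right_comm]
  exact mul_le_of_le_one_right (by positivity) (hcb _)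

theorem integral_smul_steinFeature [CompleteSpace E] (hq : Integrable q ν)
    (hg : AEStronglyMeasurable g ν) (hqg : Integrable (fun x ↦ q x * ‖g x‖) ν) (u : E) :
    ∫ x, q x • steinFeature g x u ∂ν
      = WithLp.toLp 2
          ((∫ x, q x * Real.cos ⟪u, x⟫ ∂ν) • u + ∫ x, (q x * Real.sin ⟪u, x⟫) • g x ∂ν,
            (∫ x, q x * Real.sin ⟪u, x⟫ ∂ν) • u - ∫ x, (q x * Real.cos ⟪u, x⟫) • g x ∂ν) := by
  have hcos : Integrable (fun x ↦ q x * Real.cos ⟪u, x⟫) ν :=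
    hq.mul_bdd (by fun_prop) (ae_of_all _ fun x ↦ Real.norm_eq_abs _ ▸ Real.abs_cos_le_one _)
  have hsin : Integrable (fun x ↦ q x * Real.sin ⟪u, x⟫) ν :=
    hq.mul_bdd (by fun_prop) (ae_of_all _ fun x ↦ Real.norm_eq_abs _ ▸ Real.abs_sin_le_one _)
  have hcos_g := integrable_mul_comp_inner_smul Real.continuous_cos Real.abs_cos_le_one
    hq.1 hg hqg u
  have hsin_g := integrable_mul_comp_inner_smul Real.continuous_sin Real.abs_sin_le_one
    hq.1 hg hqg u
  simp only [steinFeature, ← WithLp.toLp_smul, Prod.smul_mk, smul_add, smul_sub, smul_smul]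
  rw [integral_withLp_toLp_prod 2 (f := fun x ↦ _ + _) (g := fun x ↦ _ - _)
      ((hcos.smul_const u).add hsin_g) ((hsin.smul_const u).sub hcos_g),
    integral_add (hcos.smul_const u) hsin_g, integral_sub (hsin.smul_const u) hcos_g,
    integral_smul_const, integral_smul_const]

variable [SecondCountableTopology E] {μ : Measure E} [IsFiniteMeasure μ]

theorem integral_integral_integral_inner_smul_steinFeature [CompleteSpace E] [SFinite ν]
    (hq : Integrable q ν) (hg : Measurable g) (hqg : Integrable (fun x ↦ q x * ‖g x‖) ν)
    (hμ2 : Integrable (fun u : E ↦ ‖u‖ ^ 2) μ) :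
    ∫ x, ∫ y, ∫ u, ⟪q x • steinFeature g x u, q y • steinFeature g y u⟫ ∂μ ∂ν ∂ν
      = ∫ u, ‖∫ x, q x • steinFeature g x u ∂ν‖ ^ 2 ∂μ := by
  refine integral_integral_integral_inner_eq_integral_norm_sq
    (hq.1.comp_fst.smul (by unfold steinFeature; fun_prop)) (hq.norm.add hqg.norm)
    (b := fun u ↦ 1 + ‖u‖) ?_ fun x u ↦ ?_
  · refine ((integrable_const 2).add (hμ2.const_mul 2)).mono' (by fun_prop)
      (ae_of_all _ fun u ↦ ?_)
    rw [Real.norm_eq_abs, abs_of_nonneg (by positivity), Pi.add_apply]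
    nlinarith [sq_nonneg (‖u‖ - 1)]
  · have h := mul_le_mul_of_nonneg_left (norm_steinFeature_le g x u) (norm_nonneg (q x))
    rw [norm_smul, Pi.add_apply, norm_mul (q x), norm_norm]
    nlinarith [norm_nonneg (q x),
      mul_nonneg (mul_nonneg (norm_nonneg (q x)) (norm_nonneg (g x))) (norm_nonneg u)]

end SteinFeature

section LangevinKernel

variable {d : ℕ} {μ : Measure (EuclideanSpace ℝ (Fin d))} [IsFiniteMeasure μ]

theorem sum_fderiv_fderiv_re_charFun_sub_single
    (hμ2 : Integrable (fun u : EuclideanSpace ℝ (Fin d) ↦ ‖u‖ ^ 2) μ)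
    (x y : EuclideanSpace ℝ (Fin d)) :
    ∑ i : Fin d, fderiv ℝ (fun y1 ↦ fderiv ℝ (fun x1 ↦ (charFun μ (x1 - y1)).re) x
      (EuclideanSpace.single i 1)) y (EuclideanSpace.single i 1)
      = ∫ u, Real.cos ⟪u, x - y⟫ * ‖u‖ ^ 2 ∂μ := by
  simp only [fderiv_fderiv_re_charFun_sub_apply hμ2]
  rw [← integral_finsetSum _ fun i _ ↦ (integrable_inner_mul_inner hμ2 _ _).bdd_mul
    (by fun_prop) (ae_of_all _ fun u ↦ Real.norm_eq_abs _ ▸ Real.abs_cos_le_one _)]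
  simp only [← Finset.mul_sum, ← real_inner_self_eq_norm_sq]
  refine integral_congr_ae (ae_of_all _ fun u ↦ ?_)
  simp only [← (EuclideanSpace.basisFun (Fin d) ℝ).sum_inner_mul_inner u u,
    EuclideanSpace.basisFun_apply, real_inner_comm u]

theorem langevinHv_re_charFun (hμ2 : Integrable (fun u : EuclideanSpace ℝ (Fin d) ↦ ‖u‖ ^ 2) μ)
    (g : EuclideanSpace ℝ (Fin d) → EuclideanSpace ℝ (Fin d)) (x y : EuclideanSpace ℝ (Fin d)) :
    langevinHv (fun x y ↦ (charFun μ (x - y)).re) g x y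
      = ∫ u, ⟪steinFeature g x u, steinFeature g y u⟫ ∂μ := by
  have hμ1 := integrable_norm_of_integrable_norm_sq hμ2
  have hcos : ∀ t, ‖Real.cos t‖ ≤ 1 := fun t ↦ Real.norm_eq_abs _ ▸ Real.abs_cos_le_one t
  have hsin : ∀ t, ‖-Real.sin t‖ ≤ 1 := fun t ↦ by simpa using Real.abs_sin_le_one t
  have hint_laplacian : Integrable (fun u ↦ Real.cos ⟪u, x - y⟫ * ‖u‖ ^ 2) μ :=
    hμ2.bdd_mul (by fun_prop) (ae_of_all _ fun u ↦ hcos _)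
  have hint_grad_y : Integrable (fun u ↦ -(-Real.sin ⟪u, x - y⟫ * ⟪u, g x⟫)) μ :=
    ((integrable_inner_left hμ1 _).bdd_mul (by fun_prop) (ae_of_all _ fun u ↦ hsin _)).neg
  have hint_grad_x : Integrable (fun u ↦ -Real.sin ⟪u, x - y⟫ * ⟪u, g y⟫) μ :=
    (integrable_inner_left hμ1 _).bdd_mul (by fun_prop) (ae_of_all _ fun u ↦ hsin _)
  have hint_kernel : Integrable (fun u ↦ Real.cos ⟪u, x - y⟫ * ⟪g x, g y⟫) μ :=
    (integrable_const _).bdd_mul (by fun_prop) (ae_of_all _ fun u ↦ hcos _)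
  have hfeature : ∀ u, ⟪steinFeature g x u, steinFeature g y u⟫
      = Real.cos ⟪u, x - y⟫ * ‖u‖ ^ 2 + -(-Real.sin ⟪u, x - y⟫ * ⟪u, g x⟫)
        + -Real.sin ⟪u, x - y⟫ * ⟪u, g y⟫ + Real.cos ⟪u, x - y⟫ * ⟪g x, g y⟫ := fun u ↦ by
    rw [inner_steinFeature]; ring
  rw [langevinHv, sum_fderiv_fderiv_re_charFun_sub_single hμ2,
    fderiv_comp_const_sub (fun z ↦ (charFun μ z).re) x y,
    fderiv_comp_sub (f := fun z ↦ (charFun μ z).re), neg_apply, fderiv_re_charFun_apply hμ1,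
    fderiv_re_charFun_apply hμ1, re_charFun]
  simp only [hfeature]
  rw [integral_add ?_ hint_kernel, integral_add ?_ hint_grad_x,
    integral_add hint_laplacian hint_grad_y, integral_neg,
    integral_mul_const]
  · exact hint_laplacian.add hint_grad_y
  · exact (hint_laplacian.add hint_grad_y).add hint_grad_x

end LangevinKernel

/-- The two vectors are the real and imaginary parts of
`s q̂(s) − i ∫ ∇log p(x) e^{i⟪s,x⟫} q(x) dx ∈ ℂ^d`. -/
theorem langevin_ksd_spectral_representation_general {d : ℕ}
    (p : EuclideanSpace ℝ (Fin d) → ℝ)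
    (glp : EuclideanSpace ℝ (Fin d) → EuclideanSpace ℝ (Fin d))
    (hglp : ∀ x, HasGradientAt (fun y => Real.log (p y)) (glp x) x)
    (q : EuclideanSpace ℝ (Fin d) → ℝ)
    (hqint : Integrable q volume)
    (hmom : Integrable (fun x => ‖glp x‖ ^ 2 * q x) volume)
    (μ : Measure (EuclideanSpace ℝ (Fin d))) [IsFiniteMeasure μ]
    (hμ2 : Integrable (fun s => ‖s‖ ^ 2) μ)
    (k : EuclideanSpace ℝ (Fin d) → EuclideanSpace ℝ (Fin d) → ℝ)
    (hk : ∀ x y, (k x y : ℂ) = ∫ u, Complex.exp ((⟪x - y, u⟫ : ℂ) * Complex.I) ∂μ) :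
    ∫ x, ∫ y, langevinHv k glp x y * q x * q y
      = ∫ s,
          (‖(∫ x, q x * Real.cos ⟪s, x⟫) • s + ∫ x, (q x * Real.sin ⟪s, x⟫) • glp x‖ ^ 2
          + ‖(∫ x, q x * Real.sin ⟪s, x⟫) • s - ∫ x, (q x * Real.cos ⟪s, x⟫) • glp x‖ ^ 2)
        ∂μ := by
  have hg : Measurable glp := measurable_of_hasGradientAt hglp
  have hqg := integrable_mul_norm_of_integrable_norm_sq_mul hqint hg.aestronglyMeasurable hmom
  have hk_charFun : k = fun x y ↦ (charFun μ (x - y)).re := by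
    funext x y
    rw [← Complex.ofReal_re (k x y), hk, charFun_apply]
    simp_rw [real_inner_comm (x - y)]
  calc ∫ x, ∫ y, langevinHv k glp x y * q x * q y
      = ∫ x, ∫ y, ∫ u, ⟪q x • steinFeature glp x u, q y • steinFeature glp y u⟫ ∂μ := by
        refine integral_congr_ae (ae_of_all _ fun x ↦ integral_congr_ae (ae_of_all _ fun y ↦ ?_))
        dsimp only
        rw [hk_charFun, langevinHv_re_charFun hμ2, ← integral_mul_const, ← integral_mul_const]
        refine integral_congr_ae (ae_of_all _ fun u ↦ ?_)
        simp only [real_inner_smul_left, real_inner_smul_right]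
        ring
    _ = ∫ u, ‖∫ x, q x • steinFeature glp x u‖ ^ 2 ∂μ :=
        integral_integral_integral_inner_smul_steinFeature hqint hg hqg hμ2
    _ = _ := by
        simp only [integral_smul_steinFeature hqint hg.aestronglyMeasurable hqg,
          WithLp.prod_norm_sq_eq_of_L2, WithLp.toLp_fst, WithLp.toLp_snd]

/-- **Finite-dimensional spectral representation of the vectorised Langevin kernel Stein
discrepancy**: the element `s q̂(s) − i ∫ ∇log p(x) e^{i⟪s,x⟫} q(x) dx` of `ℂ^d` has real
part `(∫ q cos⟪s,x⟫) • s + ∫ (q sin⟪s,x⟫) • ∇log p` and imaginary part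
`(∫ q sin⟪s,x⟫) • s − ∫ (q cos⟪s,x⟫) • ∇log p`, and its squared `ℂ^d`-norm is the sum of
the squared norms of these two parts. -/
theorem langevin_ksd_spectral_representation {d : ℕ}
    (p : EuclideanSpace ℝ (Fin d) → ℝ) (hp : ∀ x, 0 < p x)
    (hpd : Differentiable ℝ p)
    (glp : EuclideanSpace ℝ (Fin d) → EuclideanSpace ℝ (Fin d))
    (hglp : ∀ x, HasGradientAt (fun y => Real.log (p y)) (glp x) x)
    (q : EuclideanSpace ℝ (Fin d) → ℝ) (hq0 : ∀ x, 0 ≤ q x)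
    (hqint : Integrable q volume) (hq1 : ∫ x, q x = 1)
    (hmom : Integrable (fun x => ‖glp x‖ ^ 2 * q x) volume)
    (μ : Measure (EuclideanSpace ℝ (Fin d))) [IsFiniteMeasure μ]
    (hμsymm : Measure.map (fun u => -u) μ = μ)
    (hμ2 : Integrable (fun s => ‖s‖ ^ 2) μ)
    (k : EuclideanSpace ℝ (Fin d) → EuclideanSpace ℝ (Fin d) → ℝ)
    (hk : ∀ x y, (k x y : ℂ) = ∫ u, Complex.exp ((⟪x - y, u⟫ : ℂ) * Complex.I) ∂μ) :
    ∫ x, ∫ y, langevinHv k glp x y * q x * q y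
      = ∫ s,
          (‖(∫ x, q x * Real.cos ⟪s, x⟫) • s + ∫ x, (q x * Real.sin ⟪s, x⟫) • glp x‖ ^ 2
          + ‖(∫ x, q x * Real.sin ⟪s, x⟫) • s - ∫ x, (q x * Real.cos ⟪s, x⟫) • glp x‖ ^ 2)
        ∂μ :=
  langevin_ksd_spectral_representation_general p glp hglp q hqint hmom μ hμ2 k hk
end

section
/- Explicit vectorised Stein kernel for the inverse multiquadric kernel (Proposition 4, IMQ case): let T : X → X be a bounded linear operator, S = T*T, and k(x,y) = (‖Tx − Ty‖² + 1)^{−1/2}. Then for all x, y ∈ X the vectorised Stein kernel satisfies h_v(x,y) = k(x,y) ⟨x + C DU(x), y + C DU(y)⟩ + k(x,y)³ ( Tr(SC²) − ⟨SC(x−y), x−y⟩ − ⟨SC(C DU(x) − C DU(y)), x−y⟩ ) − 3 k(x,y)⁵ ‖CS(x−y)‖², where Tr(SC²) := ∑_{i≥1} λ_i² ⟨S e_i, e_i⟩. -/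
/-!
The kernel is `φ (x - y)` with `φ z = (‖T z‖ ^ 2 + 1) ^ p`, `p = -1/2`, so its first partial
derivatives are `± Dφ (x - y)` and its mixed partial derivative is `-D²φ (x - y)`, all explicit by
the chain rule. In the trace term, `C e i = l i • e i` turns `l i * ⟪S (x - y), e i⟫` into
`⟪C (S (x - y)), e i⟫`, whose squares sum to `‖C (S (x - y))‖ ^ 2` by Parseval; the remaining
series `∑ l i ^ 2 * ‖T (e i)‖ ^ 2` converges since `l` is summable and `‖T (e i)‖ ≤ ‖T‖`.
-/

open MeasureTheory ProbabilityTheory Complex Filter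
open scoped RealInnerProductSpace

noncomputable def steinKernelHv {X : Type*} [NormedAddCommGroup X] [InnerProductSpace ℝ X]
    (k : X → X → ℝ) (C : X →L[ℝ] X) (DU : X → X) (e : ℕ → X) (l : ℕ → ℝ)
    (x x' : X) : ℝ :=
  (∑' i, l i ^ 2 *
      fderiv ℝ (fun y1 => fderiv ℝ (fun x1 => k x1 y1) x (e i)) x' (e i))
  - fderiv ℝ (fun x1 => k x1 x') x (C x' + C (C (DU x')))
  - fderiv ℝ (fun y1 => k x y1) x' (C x + C (C (DU x)))
  + k x x' * ⟪x + C (DU x), x' + C (DU x')⟫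

theorem HilbertBasis.hasSum_sq_mul_inner_sq {ι E : Type*} [NormedAddCommGroup E]
    [InnerProductSpace ℝ E] (b : HilbertBasis ι ℝ E) {C : E →L[ℝ] E}
    (hC : (C : E →ₗ[ℝ] E).IsSymmetric) {l : ι → ℝ} (hCb : ∀ i, C (b i) = l i • b i) (z : E) :
    HasSum (fun i => l i ^ 2 * ⟪z, b i⟫ ^ 2) (‖C z‖ ^ 2) := by
  have hcoord : ∀ i, ⟪C z, b i⟫ = l i * ⟪z, b i⟫ := fun i => by
    rw [← ContinuousLinearMap.coe_coe, hC, ContinuousLinearMap.coe_coe, hCb,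
      real_inner_smul_right]
  have hterm : ∀ i, ⟪C z, b i⟫ * ⟪b i, C z⟫ = l i ^ 2 * ⟪z, b i⟫ ^ 2 := fun i => by
    rw [real_inner_comm (C z) (b i), hcoord]
    ring
  simpa only [hterm, real_inner_self_eq_norm_sq] using b.hasSum_inner_mul_inner (C z) (C z)

section RpowNormSqAddOne

variable {E F : Type*} [NormedAddCommGroup E] [InnerProductSpace ℝ E]
  [NormedAddCommGroup F] [InnerProductSpace ℝ F] (T : E →L[ℝ] F) (p : ℝ)

theorem hasFDerivAt_rpow_norm_sq_add_one (z : E) :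
    HasFDerivAt (fun z => (‖T z‖ ^ 2 + 1) ^ p)
      ((2 * p * (‖T z‖ ^ 2 + 1) ^ (p - 1)) • (innerSL ℝ (T z)).comp T) z := by
  convert (T.hasFDerivAt.norm_sq.add_const 1).rpow_const (p := p) (Or.inl (by positivity)) using 1
  ext w
  simp only [smul_apply, ContinuousLinearMap.comp_apply, smul_eq_mul,
    nsmul_eq_mul, Nat.cast_ofNat]
  ring

theorem fderiv_rpow_norm_sq_add_one_apply (z v : E) :
    fderiv ℝ (fun z => (‖T z‖ ^ 2 + 1) ^ p) z v
      = 2 * p * (‖T z‖ ^ 2 + 1) ^ (p - 1) * ⟪T z, T v⟫ := by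
  simp [(hasFDerivAt_rpow_norm_sq_add_one T p z).fderiv]

theorem fderiv_fderiv_rpow_norm_sq_add_one_apply (z v w : E) :
    fderiv ℝ (fun z => fderiv ℝ (fun z => (‖T z‖ ^ 2 + 1) ^ p) z v) z w
      = 2 * p * (2 * (p - 1) * (‖T z‖ ^ 2 + 1) ^ (p - 2) * ⟪T z, T w⟫ * ⟪T z, T v⟫
          + (‖T z‖ ^ 2 + 1) ^ (p - 1) * ⟪T w, T v⟫) := by
  have hfun : (fun z => fderiv ℝ (fun z => (‖T z‖ ^ 2 + 1) ^ p) z v)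
      = fun z => 2 * p * (‖T z‖ ^ 2 + 1) ^ (p - 1) * ((innerSL ℝ (T v)).comp T) z := by
    funext z
    rw [fderiv_rpow_norm_sq_add_one_apply, ContinuousLinearMap.comp_apply, innerSL_apply_apply,
      real_inner_comm]
  have h : HasFDerivAt
      (fun z => 2 * p * (‖T z‖ ^ 2 + 1) ^ (p - 1) * ((innerSL ℝ (T v)).comp T) z) _ z :=
    ((hasFDerivAt_rpow_norm_sq_add_one T (p - 1) z).const_mul (2 * p)).mul
      ((innerSL ℝ (T v)).comp T).hasFDerivAt
  rw [hfun, h.fderiv]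
  simp only [add_apply, smul_apply,
    ContinuousLinearMap.comp_apply, innerSL_apply_apply, smul_eq_mul, real_inner_comm (T v)]
  rw [show p - 1 - 1 = p - 2 by ring]
  ring

theorem fderiv_rpow_norm_sq_sub_add_one_fst_apply (x y w : E) :
    fderiv ℝ (fun x' => (‖T x' - T y‖ ^ 2 + 1) ^ p) x w
      = 2 * p * (‖T x - T y‖ ^ 2 + 1) ^ (p - 1) * ⟪T x - T y, T w⟫ := by
  simp only [← map_sub]
  rw [fderiv_comp_sub (f := fun z => (‖T z‖ ^ 2 + 1) ^ p), fderiv_rpow_norm_sq_add_one_apply]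

theorem fderiv_rpow_norm_sq_sub_add_one_snd_apply (x y w : E) :
    fderiv ℝ (fun y' => (‖T x - T y'‖ ^ 2 + 1) ^ p) y w
      = -(2 * p * (‖T x - T y‖ ^ 2 + 1) ^ (p - 1) * ⟪T x - T y, T w⟫) := by
  simp only [norm_sub_rev (T x)]
  rw [fderiv_rpow_norm_sq_sub_add_one_fst_apply, ← neg_sub (T x), inner_neg_left]
  ring

theorem fderiv_fderiv_rpow_norm_sq_sub_add_one_apply (x y v w : E) :
    fderiv ℝ (fun y' => fderiv ℝ (fun x' => (‖T x' - T y'‖ ^ 2 + 1) ^ p) x v) y w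
      = -(2 * p * (2 * (p - 1) * (‖T x - T y‖ ^ 2 + 1) ^ (p - 2) * ⟪T x - T y, T w⟫
            * ⟪T x - T y, T v⟫ + (‖T x - T y‖ ^ 2 + 1) ^ (p - 1) * ⟪T w, T v⟫)) := by
  have hodd : (fun y' => fderiv ℝ (fun x' => (‖T x' - T y'‖ ^ 2 + 1) ^ p) x v)
      = fun y' => -fderiv ℝ (fun z => (‖T z‖ ^ 2 + 1) ^ p) (y' - x) v := by
    funext y'
    rw [fderiv_rpow_norm_sq_sub_add_one_fst_apply, fderiv_rpow_norm_sq_add_one_apply, map_sub,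
      norm_sub_rev, ← neg_sub (T x), inner_neg_left]
    ring
  rw [hodd, fderiv_fun_neg, neg_apply,
    fderiv_comp_sub (f := fun z => fderiv ℝ (fun z => (‖T z‖ ^ 2 + 1) ^ p) z v),
    fderiv_fderiv_rpow_norm_sq_add_one_apply, map_sub, norm_sub_rev, ← neg_sub (T x),
    inner_neg_left, inner_neg_left]
  ring

theorem Orthonormal.summable_sq_mul_inner_self_apply {ι : Type*} {b : ι → E}
    (hb : Orthonormal ℝ b) {l : ι → ℝ} (hl : Summable l) :
    Summable fun i => l i ^ 2 * ⟪T (b i), T (b i)⟫ := by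
  refine Summable.of_norm_bounded_eventually (hl.abs.mul_left (‖T‖ ^ 2)) ?_
  filter_upwards [hl.abs.tendsto_cofinite_zero.eventually_lt_const one_pos] with i hi
  have hinner : |⟪T (b i), T (b i)⟫| ≤ ‖T‖ ^ 2 := by
    rw [real_inner_self_eq_norm_sq, abs_of_nonneg (by positivity)]
    simpa [hb.1 i] using pow_le_pow_left₀ (norm_nonneg _) (T.le_opNorm (b i)) 2
  calc ‖l i ^ 2 * ⟪T (b i), T (b i)⟫‖ = |l i| ^ 2 * |⟪T (b i), T (b i)⟫| := by
        rw [norm_mul, Real.norm_eq_abs, Real.norm_eq_abs, abs_pow]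
    _ ≤ |l i| ^ 2 * ‖T‖ ^ 2 := by gcongr
    _ ≤ |l i| * ‖T‖ ^ 2 := by gcongr; nlinarith [abs_nonneg (l i)]
    _ = ‖T‖ ^ 2 * |l i| := mul_comm _ _

theorem hasSum_sq_mul_fderiv_fderiv_rpow_norm_sq_sub_add_one [CompleteSpace E] [CompleteSpace F]
    {ι : Type*} (b : HilbertBasis ι ℝ E) {C : E →L[ℝ] E} (hC : (C : E →ₗ[ℝ] E).IsSymmetric)
    {l : ι → ℝ} (hCb : ∀ i, C (b i) = l i • b i) (hl : Summable l) (x y : E) :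
    HasSum
      (fun i => l i ^ 2 *
        fderiv ℝ (fun y' => fderiv ℝ (fun x' => (‖T x' - T y'‖ ^ 2 + 1) ^ p) x (b i)) y (b i))
      (-(4 * p * (p - 1) * (‖T x - T y‖ ^ 2 + 1) ^ (p - 2))
          * ‖C (ContinuousLinearMap.adjoint T (T x - T y))‖ ^ 2
        - 2 * p * (‖T x - T y‖ ^ 2 + 1) ^ (p - 1) * ∑' i, l i ^ 2 * ⟪T (b i), T (b i)⟫) := by
  have hcross := b.hasSum_sq_mul_inner_sq hC hCb (ContinuousLinearMap.adjoint T (T x - T y))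
  have htrace := (b.orthonormal.summable_sq_mul_inner_self_apply T hl).hasSum
  refine ((hcross.mul_left _).sub (htrace.mul_left _)).congr_fun fun i => ?_
  rw [fderiv_fderiv_rpow_norm_sq_sub_add_one_apply, ContinuousLinearMap.adjoint_inner_left]
  ring

end RpowNormSqAddOne

theorem imq_kernel_stein_kernel_explicit_general
    {X : Type*} [NormedAddCommGroup X] [InnerProductSpace ℝ X] [CompleteSpace X]
    -- the covariance operator and its eigendecomposition
    (C : X →L[ℝ] X) (hCsa : IsSelfAdjoint C)
    (e : HilbertBasis ℕ ℝ X) (l : ℕ → ℝ)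
    (hCe : ∀ i, C (e i) = l i • e i) (hltr : Summable l)
    -- the potential `U` and its gradient `DU`
    (DU : X → X)
    -- the operator `T`, `S = T*T`, and the IMQ-`T` kernel
    (T : X →L[ℝ] X) (S : X →L[ℝ] X)
    (hS : S = (ContinuousLinearMap.adjoint T).comp T)
    (k : X → X → ℝ)
    (hk : ∀ x y : X, k x y = (‖T x - T y‖ ^ 2 + 1) ^ (-(1 / 2) : ℝ)) :
    ∀ x y : X,
      steinKernelHv k C DU (fun i => e i) l x y
        = k x y * ⟪x + C (DU x), y + C (DU y)⟫
          + k x y ^ 3 *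
              ((∑' i, l i ^ 2 * ⟪S (e i), e i⟫)
                - ⟪S (C (x - y)), x - y⟫
                - ⟪S (C (C (DU x) - C (DU y))), x - y⟫)
          - 3 * k x y ^ 5 * ‖C (S (x - y))‖ ^ 2 := by
  intro x y
  obtain rfl : k = fun x y => (‖T x - T y‖ ^ 2 + 1) ^ (-(1 / 2) : ℝ) := funext₂ hk
  subst hS
  have hpow : ∀ n : ℕ, ((‖T x - T y‖ ^ 2 + 1) ^ (-(1 / 2) : ℝ)) ^ n
      = (‖T x - T y‖ ^ 2 + 1) ^ (-(1 / 2) * n : ℝ) := fun n => by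
    rw [← Real.rpow_natCast, ← Real.rpow_mul (by positivity)]
  have hexp3 : (-(1 / 2) * (3 : ℕ) : ℝ) = -(1 / 2) - 1 := by norm_num
  have hexp5 : (-(1 / 2) * (5 : ℕ) : ℝ) = -(1 / 2) - 2 := by norm_num
  simp only [steinKernelHv]
  rw [(hasSum_sq_mul_fderiv_fderiv_rpow_norm_sq_sub_add_one T _ e hCsa.isSymmetric hCe hltr
      x y).tsum_eq, fderiv_rpow_norm_sq_sub_add_one_fst_apply,
    fderiv_rpow_norm_sq_sub_add_one_snd_apply, hpow 3, hpow 5, hexp3, hexp5]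
  simp only [ContinuousLinearMap.comp_apply, ContinuousLinearMap.adjoint_inner_left, map_sub T]
  rw [real_inner_comm (T x - T y), real_inner_comm (T x - T y)]
  simp only [map_sub, map_add, inner_add_right, inner_sub_right]
  ring

/-- **Explicit vectorised Stein kernel for the inverse multiquadric kernel**
(Proposition 4, IMQ case): with `S = T*T` and `k(x,y) = (‖Tx - Ty‖² + 1)^{-1/2}`,
`h_v(x,y) = k(x,y)⟪x + CDU(x), y + CDU(y)⟫ + k(x,y)³(Tr(SC²) − ⟪SC(x−y), x−y⟫ −
⟪SC(CDU(x) − CDU(y)), x−y⟫) − 3k(x,y)⁵‖CS(x−y)‖²`, where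
`Tr(SC²) = ∑ᵢ λᵢ² ⟪S eᵢ, eᵢ⟫`. -/
theorem imq_kernel_stein_kernel_explicit
    {X : Type*} [NormedAddCommGroup X] [InnerProductSpace ℝ X] [CompleteSpace X]
    [MeasurableSpace X] [BorelSpace X] [SecondCountableTopology X]
    -- the covariance operator and its eigendecomposition
    (C : X →L[ℝ] X) (hCsa : IsSelfAdjoint C)
    (e : HilbertBasis ℕ ℝ X) (l : ℕ → ℝ) (hl : ∀ i, 0 < l i)
    (hCe : ∀ i, C (e i) = l i • e i) (hltr : Summable l)
    -- the potential `U` and its gradient `DU`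
    (U : X → ℝ) (DU : X → X)
    (hU : ∀ x, HasFDerivAt U ((InnerProductSpace.toDual ℝ X) (DU x) : X →L[ℝ] ℝ) x)
    -- the operator `T`, `S = T*T`, and the IMQ-`T` kernel
    (T : X →L[ℝ] X) (S : X →L[ℝ] X)
    (hS : S = (ContinuousLinearMap.adjoint T).comp T)
    (k : X → X → ℝ)
    (hk : ∀ x y : X, k x y = (‖T x - T y‖ ^ 2 + 1) ^ (-(1 / 2) : ℝ)) :
    ∀ x y : X,
      steinKernelHv k C DU (fun i => e i) l x y
        = k x y * ⟪x + C (DU x), y + C (DU y)⟫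
          + k x y ^ 3 *
              ((∑' i, l i ^ 2 * ⟪S (e i), e i⟫)
                - ⟪S (C (x - y)), x - y⟫
                - ⟪S (C (C (DU x) - C (DU y))), x - y⟫)
          - 3 * k x y ^ 5 * ‖C (S (x - y))‖ ^ 2 :=
  imq_kernel_stein_kernel_explicit_general C hCsa e l hCe hltr DU T S hS k hk
end
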